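/- Store contexts map free locations: In the calculus λ_cl, if P; Γ; Σ ⊢ e : τ, then locs(e) = locs(Σ), i.e., the multiset of location occurrences in e equals the multiset of locations in the domain of Σ counted with multiplicity (weak locations ℓ ↦w^k τ contributing k occurrences and strong locations one occurrence). -/

import Mathlib

/-!
Formalization of the λ_cl calculus from "Type Classes for Lightweight
Substructural Types" (Clamp).
-/

namespace Clamp

/-- Arrow qualifiers: unlimited, relevant, affine, linear. -/
inductive AQ : Type
| U | R | A | L
deriving DecidableEq

/-- Reference qualifiers: strong, weak. -/
inductive RQ : Type
| s | w
deriving DecidableEq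

/-- Predicate constructors: Dup and Drop. -/
inductive K : Type
| dup | drop
deriving DecidableEq

/-- Types, with de Bruijn type variables.  A universal type `all n P τ` binds
`n` type variables (indices `0..n-1`) and carries a constraint `P` that, per
the syntactic restriction of λ_cl, only mentions the bound variables
(represented as a list of pairs of a predicate constructor and a bound
variable index). -/
inductive Ty : Type
| var : ℕ → Ty
| arr : Ty → AQ → Ty → Ty
| prod : Ty → Ty → Ty
| sum : Ty → Ty → Ty
| unit : Ty
| ref : RQ → Ty → Ty
| all : (n : ℕ) → List (K × ℕ) → Ty → Ty
deriving DecidableEq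

/-- An atomic predicate `K τ`. -/
abbrev Pred := K × Ty

/-- A constraint context: a finite list of atomic predicates. -/
abbrev PCtx := List Pred

/-- Renaming of type variables. -/
def Ty.rename (ρ : ℕ → ℕ) : Ty → Ty
| .var i => .var (ρ i)
| .arr a q b => .arr (a.rename ρ) q (b.rename ρ)
| .prod a b => .prod (a.rename ρ) (b.rename ρ)
| .sum a b => .sum (a.rename ρ) (b.rename ρ)
| .unit => .unit
| .ref rq t => .ref rq (t.rename ρ)
| .all n P t => .all n P (t.rename (fun i => if i < n then i else ρ (i - n) + n))

/-- Simultaneous substitution of type variables. -/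
def Ty.subst (σ : ℕ → Ty) : Ty → Ty
| .var i => σ i
| .arr a q b => .arr (a.subst σ) q (b.subst σ)
| .prod a b => .prod (a.subst σ) (b.subst σ)
| .sum a b => .sum (a.subst σ) (b.subst σ)
| .unit => .unit
| .ref rq t => .ref rq (t.subst σ)
| .all n P t =>
    .all n P (t.subst (fun i => if i < n then .var i else (σ (i - n)).rename (· + n)))

/-- The substitution instantiating the `ts.length` innermost type variables
with the types `ts` (and lowering the remaining variables). -/
def instσ (ts : List Ty) : ℕ → Ty :=
  fun i => (ts[i]?).getD (.var (i - ts.length))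

/-- Instantiate a type at a list of type arguments. -/
def Ty.inst (ts : List Ty) (t : Ty) : Ty := t.subst (instσ ts)

/-- Instantiate the constraints of a type scheme at a list of type
arguments. -/
def instP (ts : List Ty) (P : List (K × ℕ)) : PCtx :=
  P.map (fun p => (p.1, instσ ts p.2))

/-- Terms of λ_cl. -/
inductive Tm : Type
| var : String → Tm
| lam : AQ → String → Ty → Tm → Tm
| app : Tm → Tm → Tm
| tlam : ℕ → List (K × ℕ) → Tm → Tm
| tapp : Tm → List Ty → Tm
| pair : Tm → Tm → Tm
| letp : String → String → Tm → Tm → Tm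
| inl : Tm → Tm
| inr : Tm → Tm
| caseOf : Tm → String → Tm → String → Tm → Tm
| new : RQ → Tm → Tm
| release : RQ → Tm → Tm
| swap : RQ → Tm → Tm → Tm
| loc : ℕ → Tm
| unit : Tm
| dup : Tm → String → String → Tm → Tm
| drop : Tm → Tm → Tm

/-- Values. -/
inductive IsValue : Tm → Prop
| lam : IsValue (.lam aq x τ e)
| tlam : IsValue v → IsValue (.tlam n P v)
| pair : IsValue v₁ → IsValue v₂ → IsValue (.pair v₁ v₂)
| inl : IsValue v → IsValue (.inl v)
| inr : IsValue v → IsValue (.inr v)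
| loc : IsValue (.loc l)
| unit : IsValue .unit

/-- Capture-avoiding substitution `e[v/x]` of a term `v` for the term variable
`x` in `e`.  (Substitution stops at a binder that shadows `x`; the values
substituted during evaluation and in the substitution lemma are closed with
respect to term variables, so no capture can occur.) -/
def Tm.subst (t : Tm) (x : String) (v : Tm) : Tm :=
  match t with
  | .var y => if y = x then v else .var y
  | .lam aq y τ e => .lam aq y τ (if y = x then e else e.subst x v)
  | .app a b => .app (a.subst x v) (b.subst x v)
  | .tlam n P e => .tlam n P (e.subst x v)
  | .tapp e ts => .tapp (e.subst x v) ts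
  | .pair a b => .pair (a.subst x v) (b.subst x v)
  | .letp y₁ y₂ a b =>
      .letp y₁ y₂ (a.subst x v) (if y₁ = x ∨ y₂ = x then b else b.subst x v)
  | .inl a => .inl (a.subst x v)
  | .inr a => .inr (a.subst x v)
  | .caseOf a y₁ b₁ y₂ b₂ =>
      .caseOf (a.subst x v) y₁ (if y₁ = x then b₁ else b₁.subst x v)
        y₂ (if y₂ = x then b₂ else b₂.subst x v)
  | .new rq a => .new rq (a.subst x v)
  | .release rq a => .release rq (a.subst x v)
  | .swap rq a b => .swap rq (a.subst x v) (b.subst x v)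
  | .loc l => .loc l
  | .unit => .unit
  | .dup a y₁ y₂ b =>
      .dup (a.subst x v) y₁ y₂ (if y₁ = x ∨ y₂ = x then b else b.subst x v)
  | .drop a b => .drop (a.subst x v) (b.subst x v)

/-- Substitution of types for type variables in a term. -/
def Tm.substTy (σ : ℕ → Ty) : Tm → Tm
| .var y => .var y
| .lam aq y τ e => .lam aq y (τ.subst σ) (e.substTy σ)
| .app a b => .app (a.substTy σ) (b.substTy σ)
| .tlam n P e =>
    .tlam n P (e.substTy (fun i => if i < n then .var i else (σ (i - n)).rename (· + n)))
| .tapp e ts => .tapp (e.substTy σ) (ts.map (Ty.subst σ))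
| .pair a b => .pair (a.substTy σ) (b.substTy σ)
| .letp y₁ y₂ a b => .letp y₁ y₂ (a.substTy σ) (b.substTy σ)
| .inl a => .inl (a.substTy σ)
| .inr a => .inr (a.substTy σ)
| .caseOf a y₁ b₁ y₂ b₂ =>
    .caseOf (a.substTy σ) y₁ (b₁.substTy σ) y₂ (b₂.substTy σ)
| .new rq a => .new rq (a.substTy σ)
| .release rq a => .release rq (a.substTy σ)
| .swap rq a b => .swap rq (a.substTy σ) (b.substTy σ)
| .loc l => .loc l
| .unit => .unit
| .dup a y₁ y₂ b => .dup (a.substTy σ) y₁ y₂ (b.substTy σ)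
| .drop a b => .drop (a.substTy σ) (b.substTy σ)

/-! ### Contexts -/

/-- Linear variable contexts: each variable is bound at most once. -/
def VCtx : Type := String → Option Ty

def vempty : VCtx := fun _ => none

def vupdate (Γ : VCtx) (x : String) (τ : Ty) : VCtx :=
  fun y => if y = x then some τ else Γ y

def vsingle (x : String) (τ : Ty) : VCtx := vupdate vempty x τ

/-- Two variable contexts are compatible iff they are disjoint. -/
def VCompat (Γ₁ Γ₂ : VCtx) : Prop := ∀ x, Γ₁ x = none ∨ Γ₂ x = none

/-- Join of variable contexts. -/
def VJoin (Γ₁ Γ₂ : VCtx) : VCtx := fun x => (Γ₁ x).orElse (fun _ => Γ₂ x)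

/-- A location binding: strong `ℓ ↦s τ`, or weak `ℓ ↦w^k τ` with reference
count `k`. -/
inductive LBind : Type
| strong : Ty → LBind
| weak : Ty → ℕ → LBind

/-- The reference type `ref_rq τ` associated to a location binding. -/
def LBind.refTy : LBind → Ty
| .strong τ => .ref .s τ
| .weak τ _ => .ref .w τ

/-- Linear location contexts (store typings). -/
def SCtx : Type := ℕ → Option LBind

def sempty : SCtx := fun _ => none

def supdateC (Sg : SCtx) (l : ℕ) (b : LBind) : SCtx :=
  fun l' => if l' = l then some b else Sg l'

def ssingle (l : ℕ) (b : LBind) : SCtx := supdateC sempty l b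

/-- Two location contexts are compatible iff their strong locations are
disjoint and shared weak locations agree on their types. -/
def SCompat (Sg₁ Sg₂ : SCtx) : Prop :=
  ∀ l b₁ b₂, Sg₁ l = some b₁ → Sg₂ l = some b₂ →
    ∃ τ k₁ k₂, b₁ = .weak τ k₁ ∧ b₂ = .weak τ k₂

/-- Join of location contexts: reference counts of shared weak locations are
added. -/
def SJoin (Sg₁ Sg₂ : SCtx) : SCtx := fun l =>
  match Sg₁ l, Sg₂ l with
  | none, b => b
  | some b, none => some b
  | some (.weak τ k₁), some (.weak _ k₂) => some (.weak τ (k₁ + k₂))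
  | some b, some _ => some b

/-! ### Entailment -/

/-- Entailment of an atomic predicate from a constraint context, closed under
the fixed instance environment of Dup and Drop instances. -/
inductive Entail : PCtx → Pred → Prop
| assum {P : PCtx} {p : Pred} : p ∈ P → Entail P p
| dupUnit : Entail P (K.dup, .unit)
| dropUnit : Entail P (K.drop, .unit)
| dupProd : Entail P (K.dup, τ₁) → Entail P (K.dup, τ₂) →
    Entail P (K.dup, .prod τ₁ τ₂)
| dropProd : Entail P (K.drop, τ₁) → Entail P (K.drop, τ₂) →
    Entail P (K.drop, .prod τ₁ τ₂)
| dupSum : Entail P (K.dup, τ₁) → Entail P (K.dup, τ₂) →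
    Entail P (K.dup, .sum τ₁ τ₂)
| dropSum : Entail P (K.drop, τ₁) → Entail P (K.drop, τ₂) →
    Entail P (K.drop, .sum τ₁ τ₂)
| dupArrU : Entail P (K.dup, .arr τ₁ .U τ₂)
| dropArrU : Entail P (K.drop, .arr τ₁ .U τ₂)
| dupArrR : Entail P (K.dup, .arr τ₁ .R τ₂)
| dropArrA : Entail P (K.drop, .arr τ₁ .A τ₂)
| dupRefW : Entail P (K.dup, .ref .w τ)
| dropRef : Entail P (K.drop, τ) → Entail P (K.drop, .ref rq τ)

/-- Does the qualifier allow duplication (contraction)? -/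
def aqDup : AQ → Prop
| .U => True | .R => True | .A => False | .L => False

/-- Does the qualifier allow dropping (weakening)? -/
def aqDrop : AQ → Prop
| .U => True | .A => True | .R => False | .L => False

/-- `P ⊩ Constrain^aq(Γ; Σ)`: the Dup/Drop constraints that the qualifier `aq`
imposes on every type in the closure's contexts are entailed by `P`. -/
def ConstrainAQ (P : PCtx) (aq : AQ) (Γ : VCtx) (Sg : SCtx) : Prop :=
  (aqDup aq →
    (∀ x τ, Γ x = some τ → Entail P (K.dup, τ)) ∧
    (∀ l b, Sg l = some b → Entail P (K.dup, b.refTy))) ∧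
  (aqDrop aq →
    (∀ x τ, Γ x = some τ → Entail P (K.drop, τ)) ∧
    (∀ l b, Sg l = some b → Entail P (K.drop, b.refTy)))

/-! ### Shifting contexts under type binders -/

def pShift (n : ℕ) (P : PCtx) : PCtx :=
  P.map (fun p => (p.1, p.2.rename (· + n)))

/-- View constraints on bound type variables as predicates. -/
def pOfBound (P₂ : List (K × ℕ)) : PCtx :=
  P₂.map (fun p => (p.1, Ty.var p.2))

def vShift (n : ℕ) (Γ : VCtx) : VCtx := fun x => (Γ x).map (Ty.rename (· + n))

def LBind.shift (n : ℕ) : LBind → LBind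
| .strong τ => .strong (τ.rename (· + n))
| .weak τ k => .weak (τ.rename (· + n)) k

def sShift (n : ℕ) (Sg : SCtx) : SCtx := fun l => (Sg l).map (LBind.shift n)

/-! ### Term typing -/

/-- The typing judgment `P; Γ; Σ ⊢ e : τ` of λ_cl. -/
inductive HasTy : PCtx → VCtx → SCtx → Tm → Ty → Prop
| var : HasTy P (vsingle x τ) sempty (.var x) τ
| unit : HasTy P vempty sempty .unit .unit
| abs : Γ x = none →
    HasTy P (vupdate Γ x τ₁) Sg e τ₂ →
    ConstrainAQ P aq Γ Sg →
    HasTy P Γ Sg (.lam aq x τ₁ e) (.arr τ₁ aq τ₂)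
| app : VCompat Γ₁ Γ₂ → SCompat Sg₁ Sg₂ →
    HasTy P Γ₁ Sg₁ e₁ (.arr τ₂ aq τ) → HasTy P Γ₂ Sg₂ e₂ τ₂ →
    HasTy P (VJoin Γ₁ Γ₂) (SJoin Sg₁ Sg₂) (.app e₁ e₂) τ
| tabs : IsValue v → (∀ p ∈ P₂, p.2 < n) →
    HasTy (pShift n P ++ pOfBound P₂) (vShift n Γ) (sShift n Sg) v τ →
    HasTy P Γ Sg (.tlam n P₂ v) (.all n P₂ τ)
| tapp : HasTy P Γ Sg e (.all n P₂ τ) → ts.length = n →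
    (∀ p ∈ instP ts P₂, Entail P p) →
    HasTy P Γ Sg (.tapp e ts) (Ty.inst ts τ)
| pair : VCompat Γ₁ Γ₂ → SCompat Sg₁ Sg₂ →
    HasTy P Γ₁ Sg₁ e₁ τ₁ → HasTy P Γ₂ Sg₂ e₂ τ₂ →
    HasTy P (VJoin Γ₁ Γ₂) (SJoin Sg₁ Sg₂) (.pair e₁ e₂) (.prod τ₁ τ₂)
| letp : VCompat Γ₁ Γ₂ → SCompat Sg₁ Sg₂ →
    x₁ ≠ x₂ → Γ₂ x₁ = none → Γ₂ x₂ = none →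
    HasTy P Γ₁ Sg₁ e₁ (.prod τ₁ τ₂) →
    HasTy P (vupdate (vupdate Γ₂ x₁ τ₁) x₂ τ₂) Sg₂ e₂ τ →
    HasTy P (VJoin Γ₁ Γ₂) (SJoin Sg₁ Sg₂) (.letp x₁ x₂ e₁ e₂) τ
| inl : HasTy P Γ Sg e τ₁ → HasTy P Γ Sg (.inl e) (.sum τ₁ τ₂)
| inr : HasTy P Γ Sg e τ₂ → HasTy P Γ Sg (.inr e) (.sum τ₁ τ₂)
| caseOf : VCompat Γ₁ Γ₂ → SCompat Sg₁ Sg₂ →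
    Γ₂ x₁ = none → Γ₂ x₂ = none →
    HasTy P Γ₁ Sg₁ e₁ (.sum τ₁₁ τ₁₂) →
    HasTy P (vupdate Γ₂ x₁ τ₁₁) Sg₂ e₂₁ τ₂ →
    HasTy P (vupdate Γ₂ x₂ τ₁₂) Sg₂ e₂₂ τ₂ →
    HasTy P (VJoin Γ₁ Γ₂) (SJoin Sg₁ Sg₂) (.caseOf e₁ x₁ e₂₁ x₂ e₂₂) τ₂
| dup : VCompat Γ₁ Γ₂ → SCompat Sg₁ Sg₂ →
    x₁ ≠ x₂ → Γ₂ x₁ = none → Γ₂ x₂ = none →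
    HasTy P Γ₁ Sg₁ e₁ τ₁ →
    HasTy P (vupdate (vupdate Γ₂ x₁ τ₁) x₂ τ₁) Sg₂ e₂ τ₂ →
    Entail P (K.dup, τ₁) →
    HasTy P (VJoin Γ₁ Γ₂) (SJoin Sg₁ Sg₂) (.dup e₁ x₁ x₂ e₂) τ₂
| drop : VCompat Γ₁ Γ₂ → SCompat Sg₁ Sg₂ →
    HasTy P Γ₁ Sg₁ e₁ τ₁ → HasTy P Γ₂ Sg₂ e₂ τ₂ →
    Entail P (K.drop, τ₁) →
    HasTy P (VJoin Γ₁ Γ₂) (SJoin Sg₁ Sg₂) (.drop e₁ e₂) τ₂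
| new : HasTy P Γ Sg e τ → HasTy P Γ Sg (.new rq e) (.ref rq τ)
| locW : HasTy P vempty (ssingle l (.weak τ 1)) (.loc l) (.ref .w τ)
| locS : HasTy P vempty (ssingle l (.strong τ)) (.loc l) (.ref .s τ)
| releaseW : HasTy P Γ Sg e (.ref rq τ) →
    HasTy P Γ Sg (.release .w e) (.sum .unit τ)
| releaseS : HasTy P Γ Sg e (.ref .s τ) →
    HasTy P Γ Sg (.release .s e) τ
| swapW : VCompat Γ₁ Γ₂ → SCompat Sg₁ Sg₂ →
    HasTy P Γ₁ Sg₁ e₁ (.ref rq τ) → HasTy P Γ₂ Sg₂ e₂ τ →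
    HasTy P (VJoin Γ₁ Γ₂) (SJoin Sg₁ Sg₂) (.swap .w e₁ e₂) (.prod (.ref rq τ) τ)
| swapS : VCompat Γ₁ Γ₂ → SCompat Sg₁ Sg₂ →
    HasTy P Γ₁ Sg₁ e₁ (.ref .s τ₁) → HasTy P Γ₂ Sg₂ e₂ τ₂ →
    HasTy P (VJoin Γ₁ Γ₂) (SJoin Sg₁ Sg₂) (.swap .s e₁ e₂) (.prod (.ref .s τ₂) τ₁)

/-! ### Evaluation contexts -/

/-- Evaluation contexts (left-to-right, call-by-value). -/
inductive ECtx : Type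
| hole : ECtx
| appL : ECtx → Tm → ECtx
| appR : (v : Tm) → IsValue v → ECtx → ECtx
| tapp : ECtx → List Ty → ECtx
| pairL : ECtx → Tm → ECtx
| pairR : (v : Tm) → IsValue v → ECtx → ECtx
| inl : ECtx → ECtx
| inr : ECtx → ECtx
| caseOf : ECtx → String → Tm → String → Tm → ECtx
| letp : String → String → ECtx → Tm → ECtx
| new : RQ → ECtx → ECtx
| release : RQ → ECtx → ECtx
| swapL : RQ → ECtx → Tm → ECtx
| swapR : RQ → (v : Tm) → IsValue v → ECtx → ECtx
| dup : ECtx → String → String → Tm → ECtx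
| drop : ECtx → Tm → ECtx

/-- Plug a term into the hole of an evaluation context. -/
def ECtx.plug : ECtx → Tm → Tm
| .hole, M => M
| .appL E e, M => .app (E.plug M) e
| .appR v _ E, M => .app v (E.plug M)
| .tapp E ts, M => .tapp (E.plug M) ts
| .pairL E e, M => .pair (E.plug M) e
| .pairR v _ E, M => .pair v (E.plug M)
| .inl E, M => .inl (E.plug M)
| .inr E, M => .inr (E.plug M)
| .caseOf E x₁ e₁ x₂ e₂, M => .caseOf (E.plug M) x₁ e₁ x₂ e₂
| .letp x₁ x₂ E e, M => .letp x₁ x₂ (E.plug M) e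
| .new rq E, M => .new rq (E.plug M)
| .release rq E, M => .release rq (E.plug M)
| .swapL rq E e, M => .swap rq (E.plug M) e
| .swapR rq v _ E, M => .swap rq v (E.plug M)
| .dup E x₁ x₂ e, M => .dup (E.plug M) x₁ x₂ e
| .drop E e, M => .drop (E.plug M) e

/-! ### locs -/

/-- The multiset (represented as a list) of store locations used by a term;
for `case`, only the scrutinee and the first branch are counted. -/
def locs : Tm → List ℕ
| .var _ => []
| .lam _ _ _ e => locs e
| .app a b => locs a ++ locs b
| .tlam _ _ v => locs v
| .tapp e _ => locs e
| .pair a b => locs a ++ locs b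
| .letp _ _ a b => locs a ++ locs b
| .inl a => locs a
| .inr a => locs a
| .caseOf a _ b _ _ => locs a ++ locs b
| .new _ a => locs a
| .release _ a => locs a
| .swap _ a b => locs a ++ locs b
| .loc l => [l]
| .unit => []
| .dup a _ _ b => locs a ++ locs b
| .drop a b => locs a ++ locs b

/-! ### Stores and reference count management -/

/-- A store maps locations to reference-counted values. -/
def Store : Type := ℕ → Option (ℕ × Tm)

def emptyStore : Store := fun _ => none

def supdate (μ : Store) (l : ℕ) (c : ℕ × Tm) : Store :=
  fun l' => if l' = l then some c else μ l'

def sremove (μ : Store) (l : ℕ) : Store :=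
  fun l' => if l' = l then none else μ l'

/-- Increment the reference count of a location. -/
def incr (μ : Store) (l : ℕ) : Store :=
  fun l' => if l' = l then (μ l').map (fun c => (c.1 + 1, c.2)) else μ l'

/-- Increment the reference counts of a multiset of locations. -/
def incrMany (μ : Store) (ls : List ℕ) : Store := ls.foldl incr μ

mutual
/-- Decrement the reference count of one location; deallocating a cell whose
count reaches zero recursively decrements the counts of the locations of its
contents. -/
inductive Dec : Store → ℕ → Store → Prop
| count : μ l = some (k + 2, v) → Dec μ l (supdate μ l (k + 1, v))
| free : μ l = some (1, v) → DecMany (sremove μ l) (locs v) μ' → Dec μ l μ'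

/-- Decrement the reference counts of a multiset of locations. -/
inductive DecMany : Store → List ℕ → Store → Prop
| nil : DecMany μ [] μ
| cons : Dec μ l μ' → DecMany μ' ls μ'' → DecMany μ (l :: ls) μ''
end

/-! ### Small-step semantics -/

/-- Head (redex) steps of the small-step semantics. -/
inductive HeadStep : Store → Tm → Store → Tm → Prop
| beta : IsValue v →
    HeadStep μ (.app (.lam aq x τ e) v) μ (e.subst x v)
| tbeta : IsValue v → ts.length = n →
    HeadStep μ (.tapp (.tlam n P₂ v) ts) μ (v.substTy (instσ ts))
| new : IsValue v → μ l = none →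
    HeadStep μ (.new rq v) (supdate μ l (1, v)) (.loc l)
| swap : IsValue v₂ → μ l = some (i, v₁) →
    HeadStep μ (.swap rq (.loc l) v₂) (supdate μ l (i, v₂)) (.pair (.loc l) v₁)
| releaseW1 : μ l = some (1, v) →
    HeadStep μ (.release .w (.loc l)) (sremove μ l) (.inl v)
| releaseWn : μ l = some (i + 2, v) →
    HeadStep μ (.release .w (.loc l)) (supdate μ l (i + 1, v)) (.inr .unit)
| releaseS : μ l = some (1, v) →
    HeadStep μ (.release .s (.loc l)) (sremove μ l) v
| dup : IsValue v →
    HeadStep μ (.dup v x₁ x₂ e) (incrMany μ (locs v)) ((e.subst x₁ v).subst x₂ v)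
| drop : IsValue v → DecMany μ (locs v) μ' →
    HeadStep μ (.drop v e) μ' e

/-- The small-step relation: head steps closed under evaluation contexts. -/
inductive Step : Store → Tm → Store → Tm → Prop
| ctx (E : ECtx) : HeadStep μ e μ' e' → Step μ (ECtx.plug E e) μ' (ECtx.plug E e')

/-! ### Store and configuration typing -/

/-- Store typing `Σ₀ ⊢ μ : Σ`: each stored value is typed in the empty
variable context against its binding in `Σ`, accumulating (in `Σ₀`) the
location contexts the stored values require. -/
inductive StoreTy : SCtx → Store → SCtx → Prop
| nil : StoreTy sempty emptyStore sempty
| consW : SCompat Sg₁ Sgv → μ l = none → Sg₂ l = none →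
    StoreTy Sg₁ μ Sg₂ → IsValue v → HasTy [] vempty Sgv v τ →
    StoreTy (SJoin Sg₁ Sgv) (supdate μ l (i, v)) (supdateC Sg₂ l (.weak τ i))
| consS : SCompat Sg₁ Sgv → μ l = none → Sg₂ l = none →
    StoreTy Sg₁ μ Sg₂ → IsValue v → HasTy [] vempty Sgv v τ →
    StoreTy (SJoin Sg₁ Sgv) (supdate μ l (1, v)) (supdateC Sg₂ l (.strong τ))

/-- Configuration typing `⊢ (μ, e) : τ`. -/
def ConfTy (μ : Store) (e : Tm) (τ : Ty) : Prop :=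
  ∃ Sg₁ Sg₂, SCompat Sg₁ Sg₂ ∧ StoreTy Sg₁ μ (SJoin Sg₁ Sg₂) ∧
    HasTy [] vempty Sg₂ e τ

end Clamp

namespace Clamp

/-- The multiplicity with which a location occurs in the domain of a location
context: a weak binding `ℓ ↦w^k τ` contributes `k` occurrences and a strong
binding one occurrence. -/
def smult (Sg : SCtx) (l : ℕ) : ℕ :=
  match Sg l with
  | none => 0
  | some (.strong _) => 1
  | some (.weak _ k) => k

/-!
Induction on the typing derivation. A location rule contributes exactly one occurrence of `ℓ`
in the term and in `Σ`. Every rule with two premises splits `Σ` as a join of compatible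
contexts, and compatibility forces shared locations to be weak, so the multiplicities simply
add. Type abstraction only shifts the types stored in `Σ`.
-/

lemma smult_sjoin {Sg₁ Sg₂ : SCtx} (hc : SCompat Sg₁ Sg₂) (l : ℕ) :
    smult (SJoin Sg₁ Sg₂) l = smult Sg₁ l + smult Sg₂ l := by
  unfold smult SJoin
  cases h₁ : Sg₁ l with
  | none => rcases Sg₂ l with _ | ⟨_ | _⟩ <;> simp
  | some b₁ =>
    cases h₂ : Sg₂ l with
    | none => cases b₁ <;> rfl
    | some b₂ =>
      obtain ⟨τ, k₁, k₂, rfl, rfl⟩ := hc l b₁ b₂ h₁ h₂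
      rfl

lemma smult_sShift (n : ℕ) (Sg : SCtx) (l : ℕ) : smult (sShift n Sg) l = smult Sg l := by
  unfold smult sShift
  cases Sg l with
  | none => rfl
  | some b => cases b <;> rfl

lemma count_locs_loc_eq_smult_ssingle_weak (l l' : ℕ) (τ : Ty) :
    (locs (.loc l)).count l' = smult (ssingle l (.weak τ 1)) l' := by
  by_cases h : l' = l <;> simp [locs, smult, ssingle, supdateC, sempty, h, Ne.symm]

lemma count_locs_loc_eq_smult_ssingle_strong (l l' : ℕ) (τ : Ty) :
    (locs (.loc l)).count l' = smult (ssingle l (.strong τ)) l' := by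
  by_cases h : l' = l <;> simp [locs, smult, ssingle, supdateC, sempty, h, Ne.symm]

/-- **Store contexts map free locations** (Lemma 4 of the Clamp paper).
If `P; Γ; Σ ⊢ e : τ` then `locs(e) = locs(Σ)` as multisets: each location
occurs in `e` exactly as many times as its multiplicity in the domain
of `Σ`. -/
theorem store_contexts_map_free_locations
    {P : PCtx} {Γ : VCtx} {Sg : SCtx} {e : Tm} {τ : Ty}
    (h : HasTy P Γ Sg e τ) :
    ∀ l, (locs e).count l = smult Sg l := by
  intro l
  induction h with
  | var | unit => rfl
  | abs _ _ _ ih | tapp _ _ _ ih | inl _ ih | inr _ ih | new _ ih | releaseW _ ih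
    | releaseS _ ih => exact ih
  | tabs _ _ _ ih => rwa [smult_sShift] at ih
  | app _ hc _ _ ih₁ ih₂ | pair _ hc _ _ ih₁ ih₂ | letp _ hc _ _ _ _ _ ih₁ ih₂
    | caseOf _ hc _ _ _ _ _ ih₁ ih₂ | dup _ hc _ _ _ _ _ _ ih₁ ih₂ | drop _ hc _ _ _ ih₁ ih₂
    | swapW _ hc _ _ ih₁ ih₂ | swapS _ hc _ _ ih₁ ih₂ =>
    rw [locs, List.count_append, ih₁, ih₂, smult_sjoin hc]
  | locW => exact count_locs_loc_eq_smult_ssingle_weak _ _ _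
  | locS => exact count_locs_loc_eq_smult_ssingle_strong _ _ _

end Clamp
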